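/- arXiv:1906.04217 — 2 statements merged into one kernel-verified Lean document; each statement's English description precedes it below -/
import Mathlib

section
/- Let n ≥ 2 be an integer, α a real number, σ_w² > 0, λ_1 > 0, D > 0, and let D_1, …, D_n > 0 satisfy Σ_{t=1}^n D_t ≤ n·D. Define λ_t = α² D_{t−1} + σ_w² for 2 ≤ t ≤ n and R_t* = (1/2)·log₂(λ_t/D_t). Then (1/n)·Σ_{t=1}^n R_t* ≥ (1/(2n))·log₂(λ_1/(n·D)) + ((n−1)/(2n))·log₂(α² + (n−1)·σ_w²/(n·D)). -/
lemma tangent_log (a w x c : ℝ) (ha : 0 ≤ a) (hw : 0 < w) (hx : 0 < x) (hc : 0 < c) :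
    Real.log x - Real.log (a*x+w) ≤
      Real.log c - Real.log (a*c+w) + w*(x-c)/(c*(a*c+w)) := by
  have hax : 0 < a*x+w := by positivity
  have hac : 0 < a*c+w := by positivity
  have h1 : Real.log (x*(a*c+w)/(c*(a*x+w))) ≤ x*(a*c+w)/(c*(a*x+w)) - 1 :=
    Real.log_le_sub_one_of_pos (by positivity)
  have h2 : Real.log (x*(a*c+w)/(c*(a*x+w)))
      = Real.log x - Real.log (a*x+w) - (Real.log c - Real.log (a*c+w)) := by
    rw [Real.log_div (by positivity) (by positivity), Real.log_mul hx.ne' hac.ne',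
      Real.log_mul hc.ne' hax.ne']
    ring
  have h3 : x*(a*c+w)/(c*(a*x+w)) - 1 = w*(x-c)/(c*(a*x+w)) := by
    field_simp
    ring
  have h4 : w*(x-c)/(c*(a*x+w)) ≤ w*(x-c)/(c*(a*c+w)) := by
    have h5 : w*(x-c)/(c*(a*c+w)) - w*(x-c)/(c*(a*x+w))
        = a*w*(x-c)^2/(c*(a*x+w)*(a*c+w)) := by
      field_simp
      ring
    nlinarith [div_nonneg (by positivity : (0:ℝ) ≤ a*w*(x-c)^2)
      (by positivity : (0:ℝ) ≤ c*(a*x+w)*(a*c+w))]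
  rw [h2, h3] at h1
  linarith

/-- Finite-horizon lower bound (derivation of Corollary 1):
for a time-invariant Gauss-Markov source with λ_t = α² D_{t−1} + σ_w² (t ≥ 2)
and average total distortion Σ_{t=1}^n D_t ≤ n·D,
(1/n)·Σ_{t=1}^n R_t* ≥ (1/(2n))·log₂(λ_1/(n·D))
  + ((n−1)/(2n))·log₂(α² + (n−1)·σ_w²/(n·D)),
where R_t* = (1/2)·log₂(λ_t/D_t). -/
theorem stmt_5 (n : ℕ) (hn : 2 ≤ n) (α σw2 lam1 D : ℝ)
    (hσ : 0 < σw2) (hlam1 : 0 < lam1) (hD : 0 < D)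
    (Dt lam Rstar : ℕ → ℝ)
    (hDt : ∀ t ∈ Finset.Icc 1 n, 0 < Dt t)
    (hsum : ∑ t ∈ Finset.Icc 1 n, Dt t ≤ (n : ℝ) * D)
    (hlam_1 : lam 1 = lam1)
    (hlam : ∀ t ∈ Finset.Icc 2 n, lam t = α ^ 2 * Dt (t - 1) + σw2)
    (hR : ∀ t ∈ Finset.Icc 1 n, Rstar t = (1 / 2) * Real.logb 2 (lam t / Dt t)) :
    (1 / (n : ℝ)) * ∑ t ∈ Finset.Icc 1 n, Rstar t
      ≥ (1 / (2 * (n : ℝ))) * Real.logb 2 (lam1 / ((n : ℝ) * D))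
        + (((n : ℝ) - 1) / (2 * (n : ℝ)))
          * Real.logb 2 (α ^ 2 + ((n : ℝ) - 1) * σw2 / ((n : ℝ) * D)) := by
  have hn2 : (2:ℝ) ≤ (n:ℝ) := by exact_mod_cast hn
  have hnpos : (0:ℝ) < (n:ℝ) := by linarith
  have hn1 : (0:ℝ) < (n:ℝ) - 1 := by linarith
  have hND : (0:ℝ) < (n:ℝ)*D := by positivity
  have ha : (0:ℝ) ≤ α^2 := sq_nonneg α
  set a := α^2 with ha_def
  set c := (n:ℝ)*D/((n:ℝ)-1) with hc_def
  have hc : 0 < c := div_pos hND hn1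
  have hacw : 0 < a*c + σw2 := by positivity
  have hlog2 : (0:ℝ) < Real.log 2 := Real.log_pos one_lt_two
  set s := σw2/(c*(a*c+σw2)) with hs_def
  have hs : 0 < s := by positivity
  have hDt' : ∀ t ∈ Finset.Icc 1 (n-1), 0 < Dt t := by
    intro t ht
    apply hDt
    simp only [Finset.mem_Icc] at *
    omega
  have hDtn : 0 < Dt n := hDt n (by simp only [Finset.mem_Icc]; omega)
  have split2 : Finset.Icc 1 n = insert n (Finset.Icc 1 (n-1)) := by
    ext t; simp only [Finset.mem_Icc, Finset.mem_insert]; omega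
  have hnotmem : n ∉ Finset.Icc 1 (n-1) := by simp only [Finset.mem_Icc]; omega
  set S1 := ∑ t ∈ Finset.Icc 1 (n-1), Dt t with hS1_def
  have hS1 : S1 + Dt n ≤ (n:ℝ)*D := by
    rw [split2, Finset.sum_insert hnotmem] at hsum
    linarith
  have hS1nonneg : 0 ≤ S1 := Finset.sum_nonneg fun t ht => (hDt' t ht).le
  have hcc : ((n:ℝ)-1)*c = (n:ℝ)*D := by
    rw [hc_def]; field_simp
  have hcard : (Finset.Icc 1 (n-1)).card = n - 1 := by
    rw [Nat.card_Icc]; omega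
  have hcast : ((n-1 : ℕ):ℝ) = (n:ℝ)-1 := by
    rw [Nat.cast_sub (by omega : 1 ≤ n)]; simp
  have hlampos : ∀ t ∈ Finset.Icc 1 n, 0 < lam t := by
    intro t ht
    rw [Finset.mem_Icc] at ht
    rcases Nat.eq_or_lt_of_le ht.1 with h1 | h1
    · rw [← h1, hlam_1]; exact hlam1
    · rw [hlam t (Finset.mem_Icc.mpr ⟨h1, ht.2⟩)]
      have hD1 : 0 < Dt (t-1) := hDt _ (Finset.mem_Icc.mpr ⟨by omega, by omega⟩)
      exact add_pos_of_nonneg_of_pos (mul_nonneg ha hD1.le) hσ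
  -- rewrite the sum of logs
  have e1 : ∑ t ∈ Finset.Icc 1 n, Real.log (lam t / Dt t)
      = ∑ t ∈ Finset.Icc 1 n, (Real.log (lam t) - Real.log (Dt t)) :=
    Finset.sum_congr rfl fun t ht => Real.log_div (hlampos t ht).ne' (hDt t ht).ne'
  have e2 : ∑ t ∈ Finset.Icc 1 n, Real.log (lam t)
      = Real.log lam1 + ∑ t ∈ Finset.Icc 1 (n-1), Real.log (a * Dt t + σw2) := by
    have split1 : Finset.Icc 1 n = insert 1 (Finset.Icc 2 n) := by
      ext t; simp only [Finset.mem_Icc, Finset.mem_insert]; omega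
    rw [split1, Finset.sum_insert (by simp [Finset.mem_Icc])]
    congr 1
    · rw [hlam_1]
    · rw [Finset.sum_congr rfl (fun t ht => by rw [hlam t ht])]
      apply Finset.sum_nbij' (fun t => t - 1) (fun t => t + 1)
      · intro t ht; simp only [Finset.mem_Icc] at *; omega
      · intro t ht; simp only [Finset.mem_Icc] at *; omega
      · intro t ht; simp only [Finset.mem_Icc] at ht; omega
      · intro t ht; simp only [Finset.mem_Icc] at ht; omega
      · intro t ht; rfl
  have e3 : ∑ t ∈ Finset.Icc 1 n, Real.log (Dt t)
      = Real.log (Dt n) + ∑ t ∈ Finset.Icc 1 (n-1), Real.log (Dt t) := by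
    rw [split2, Finset.sum_insert hnotmem]
  -- per-term tangent bound and its sum
  have sumB : ∑ t ∈ Finset.Icc 1 (n-1), (Real.log (a * Dt t + σw2) - Real.log (Dt t))
      ≥ ((n:ℝ)-1)*(Real.log (a*c+σw2) - Real.log c) - s*(S1 - (n:ℝ)*D) := by
    have hterm : ∀ t ∈ Finset.Icc 1 (n-1),
        (Real.log (a*c+σw2) - Real.log c) - s*(Dt t - c)
          ≤ Real.log (a * Dt t + σw2) - Real.log (Dt t) := by
      intro t ht
      have h := tangent_log a σw2 (Dt t) c ha hσ (hDt' t ht) hc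
      have hrw : σw2*(Dt t - c)/(c*(a*c+σw2)) = s*(Dt t - c) := by
        rw [hs_def]; ring
      rw [hrw] at h
      linarith
    have h := Finset.sum_le_sum hterm
    have hLHS : ∑ t ∈ Finset.Icc 1 (n-1),
        ((Real.log (a*c+σw2) - Real.log c) - s*(Dt t - c))
        = ((n:ℝ)-1)*(Real.log (a*c+σw2) - Real.log c) - s*(S1 - ((n:ℝ)-1)*c) := by
      rw [Finset.sum_sub_distrib, Finset.sum_const, hcard, nsmul_eq_mul, hcast]
      rw [← Finset.mul_sum, Finset.sum_sub_distrib, Finset.sum_const, hcard,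
        nsmul_eq_mul, hcast, ← hS1_def]
    rw [hLHS, hcc] at h
    linarith
  -- bound log (Dt n)
  have hlogDn : Real.log (Dt n) ≤ Real.log ((n:ℝ)*D) + (Dt n - (n:ℝ)*D)/((n:ℝ)*D) := by
    have h1 : Real.log (Dt n / ((n:ℝ)*D)) ≤ Dt n / ((n:ℝ)*D) - 1 :=
      Real.log_le_sub_one_of_pos (by positivity)
    rw [Real.log_div hDtn.ne' hND.ne'] at h1
    have h2 : Dt n / ((n:ℝ)*D) - 1 = (Dt n - (n:ℝ)*D)/((n:ℝ)*D) := by field_simp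
    linarith
  -- leftover nonpositive
  have hleft : s*(S1 - (n:ℝ)*D) + (Dt n - (n:ℝ)*D)/((n:ℝ)*D) ≤ 0 := by
    have h1 : s*(S1 - (n:ℝ)*D) ≤ s*(-Dt n) :=
      mul_le_mul_of_nonneg_left (by linarith) hs.le
    have h2 : (Dt n - (n:ℝ)*D)/((n:ℝ)*D) ≤ 0 :=
      div_nonpos_of_nonpos_of_nonneg (by linarith) hND.le
    nlinarith [mul_pos hs hDtn]
  -- key inequality
  have key : ∑ t ∈ Finset.Icc 1 n, Real.log (lam t / Dt t)
      ≥ (Real.log lam1 - Real.log ((n:ℝ)*D))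
        + ((n:ℝ)-1) * (Real.log (a*c+σw2) - Real.log c) := by
    rw [e1, Finset.sum_sub_distrib, e2, e3]
    rw [Finset.sum_sub_distrib] at sumB
    linarith [sumB, hlogDn, hleft]
  -- convert to the goal
  have eR : ∑ t ∈ Finset.Icc 1 n, Rstar t
      = (1/(2*Real.log 2)) * ∑ t ∈ Finset.Icc 1 n, Real.log (lam t / Dt t) := by
    rw [Finset.mul_sum]
    refine Finset.sum_congr rfl fun t ht => ?_
    rw [hR t ht, Real.logb]
    ring
  have eb1 : Real.logb 2 (lam1 / ((n:ℝ)*D))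
      = (Real.log lam1 - Real.log ((n:ℝ)*D))/Real.log 2 := by
    rw [Real.logb, Real.log_div hlam1.ne' hND.ne']
  have harg : a + ((n:ℝ)-1)*σw2/((n:ℝ)*D) = (a*c+σw2)/c := by
    rw [hc_def]; field_simp
  have eb2 : Real.logb 2 (a + ((n:ℝ)-1)*σw2/((n:ℝ)*D))
      = (Real.log (a*c+σw2) - Real.log c)/Real.log 2 := by
    rw [harg, Real.logb, Real.log_div hacw.ne' hc.ne']
  rw [eR, eb1, eb2]
  have hmul : 0 < 1/(2*(n:ℝ)*Real.log 2) := by positivity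
  have hkey2 := mul_le_mul_of_nonneg_left key (le_of_lt hmul)
  have elhs : (1/(n:ℝ)) * ((1/(2*Real.log 2)) * ∑ t ∈ Finset.Icc 1 n, Real.log (lam t / Dt t))
      = (1/(2*(n:ℝ)*Real.log 2)) * ∑ t ∈ Finset.Icc 1 n, Real.log (lam t / Dt t) := by
    ring
  have erhs : (1/(2*(n:ℝ))) * ((Real.log lam1 - Real.log ((n:ℝ)*D))/Real.log 2)
      + (((n:ℝ)-1)/(2*(n:ℝ))) * ((Real.log (a*c+σw2) - Real.log c)/Real.log 2)
      = (1/(2*(n:ℝ)*Real.log 2)) * ((Real.log lam1 - Real.log ((n:ℝ)*D))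
        + ((n:ℝ)-1) * (Real.log (a*c+σw2) - Real.log c)) := by
    ring
  rw [elhs, erhs]
  exact hkey2
end

section
/- Let α, β be real numbers with |α| > 1 and β ≠ 0, let N > 0, K' > 0, σ_w² > 0 and K ≥ 0, and set L = αβK'/(β²K' + N). Suppose R is a real number with 2^{2R} > α² and lqg* = σ_w²·K + αβL·K'·σ_w²/(2^{2R} − α²). Then R = (1/2)·[ log₂(α²) + log₂( 1 + (β²K'²σ_w²/(β²K' + N))/(lqg* − σ_w²·K) ) ], and consequently R > log₂|α|. -/
/-- Stability observation of Remark 4.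
With L = αβK'/(β²K' + N), 2^{2R} > α², and
lqg* = σ_w²·K + αβL·K'·σ_w²/(2^{2R} − α²), one has
R = (1/2)·[log₂(α²) + log₂(1 + (β²K'²σ_w²/(β²K' + N))/(lqg* − σ_w²·K))],
hence R > log₂|α| whenever |α| > 1. -/
theorem stmt_10 (α β N K' σw2 K L R lqg : ℝ)
    (hα : 1 < |α|) (hβ : β ≠ 0) (hN : 0 < N) (hK' : 0 < K') (hσ : 0 < σw2)
    (hK : 0 ≤ K)
    (hL : L = α * β * K' / (β ^ 2 * K' + N))
    (hR : α ^ 2 < (2 : ℝ) ^ (2 * R))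
    (hlqg : lqg = σw2 * K + α * β * L * K' * σw2 / ((2 : ℝ) ^ (2 * R) - α ^ 2)) :
    R = (1 / 2) * (Real.logb 2 (α ^ 2)
        + Real.logb 2 (1 + (β ^ 2 * K' ^ 2 * σw2 / (β ^ 2 * K' + N))
            / (lqg - σw2 * K)))
      ∧ Real.logb 2 |α| < R := by
  have hα2 : (1 : ℝ) < α ^ 2 := by
    have := sq_abs α ▸ one_lt_pow₀ hα (by norm_num : 2 ≠ 0)
    simpa [sq_abs] using one_lt_pow₀ hα (by norm_num : 2 ≠ 0)
  have hα0 : α ≠ 0 := by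
    intro h; simp [h] at hα2; linarith
  have hD : 0 < β ^ 2 * K' + N := by positivity
  have hE : 0 < (2 : ℝ) ^ (2 * R) - α ^ 2 := by linarith
  have hdiff : lqg - σw2 * K =
      α ^ 2 * β ^ 2 * K' ^ 2 * σw2 / ((β ^ 2 * K' + N) * ((2 : ℝ) ^ (2 * R) - α ^ 2)) := by
    rw [hlqg, hL]; field_simp; ring
  have hX : 1 + (β ^ 2 * K' ^ 2 * σw2 / (β ^ 2 * K' + N)) / (lqg - σw2 * K)
      = (2 : ℝ) ^ (2 * R) / α ^ 2 := by
    rw [hdiff]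
    field_simp
    ring
  have h2R : Real.logb 2 ((2 : ℝ) ^ (2 * R)) = 2 * R :=
    Real.logb_rpow (by norm_num) (by norm_num)
  have hmain : R = (1 / 2) * (Real.logb 2 (α ^ 2)
        + Real.logb 2 (1 + (β ^ 2 * K' ^ 2 * σw2 / (β ^ 2 * K' + N))
            / (lqg - σw2 * K))) := by
    rw [hX, Real.logb_div (by positivity) (by positivity), h2R]
    ring
  refine ⟨hmain, ?_⟩
  have hlt : Real.logb 2 (α ^ 2) < 2 * R := by
    calc Real.logb 2 (α ^ 2) < Real.logb 2 ((2 : ℝ) ^ (2 * R)) :=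
          Real.logb_lt_logb (by norm_num) (by positivity) hR
      _ = 2 * R := h2R
  have : Real.logb 2 |α| = (1 / 2) * Real.logb 2 (α ^ 2) := by
    rw [← sq_abs, Real.logb_pow]
    push_cast
    ring
  rw [this]; linarith
end
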